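/- arXiv:2003.03248 — 2 statements merged into one kernel-verified Lean document; each statement's English description precedes it below -/
import Mathlib

section
/- Let ξ > 0 be such that D_ξ := DᵀD − ξ²I is invertible, and let ω ≥ 0 be such that A(iω) is invertible. Then ξ is a singular value of G(iω), i.e. det(G(iω)* G(iω) − ξ² I) = 0, if and only if det H_ξ(iω) = 0. -/
/-!
Eliminating `(D Dᵀ − ξ² I)⁻¹` through the push-through identity
`ξ² (D Dᵀ − ξ² I)⁻¹ = D D_ξ⁻¹ Dᵀ − I`, the matrix `H_ξ(λ)` becomes a perturbation `T + U D_ξ⁻¹ V`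
of the block lower-triangular `T = [[A(λ), 0], [CᵀC, −A(−λ)ᵀ]]`, and `V T⁻¹ U = G(−λ)ᵀ G(λ) − DᵀD`.
The matrix determinant lemma then gives
`det H_ξ(λ) = det A(λ) · det(−A(−λ)ᵀ) · det D_ξ⁻¹ · det(G(−λ)ᵀ G(λ) − ξ² I)`,
and on the imaginary axis `G(−iω)ᵀ = G(iω)*` because the coefficient matrices are real.
-/

open Matrix Complex

noncomputable section

variable {n nu ny m : ℕ}

/-- `D_ξ = Dᵀ D − ξ² I`. -/
def Dxi (D : Matrix (Fin ny) (Fin nu) ℝ) (ξ : ℝ) : Matrix (Fin nu) (Fin nu) ℝ :=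
  Dᵀ * D - ξ ^ 2 • (1 : Matrix (Fin nu) (Fin nu) ℝ)

/-- `(Dᵀ)_ξ = D Dᵀ − ξ² I`, the matrix denoted `D_ξ^{-T}`-inverse base in the paper
(the only dimensionally consistent reading of the `(2,1)` block of `M₀`).
Note that it is invertible iff `D_ξ` is (for `ξ ≠ 0`), since `DᵀD` and `DDᵀ` have the
same nonzero eigenvalues. -/
def DxiT (D : Matrix (Fin ny) (Fin nu) ℝ) (ξ : ℝ) : Matrix (Fin ny) (Fin ny) ℝ :=
  D * Dᵀ - ξ ^ 2 • (1 : Matrix (Fin ny) (Fin ny) ℝ)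

/-- The block matrix `M₀`. -/
def Mzero (A0 : Matrix (Fin n) (Fin n) ℝ) (B : Matrix (Fin n) (Fin nu) ℝ)
    (C : Matrix (Fin ny) (Fin n) ℝ) (D : Matrix (Fin ny) (Fin nu) ℝ) (ξ : ℝ) :
    Matrix (Fin n ⊕ Fin n) (Fin n ⊕ Fin n) ℝ :=
  fromBlocks (A0 - B * (Dxi D ξ)⁻¹ * Dᵀ * C) (-(B * (Dxi D ξ)⁻¹ * Bᵀ))
    (ξ ^ 2 • (Cᵀ * (DxiT D ξ)⁻¹ * C)) (-A0ᵀ + Cᵀ * D * (Dxi D ξ)⁻¹ * Bᵀ)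

/-- The block matrix `Mᵢ` for `1 ≤ i ≤ m`. -/
def Mpos (Ai : Matrix (Fin n) (Fin n) ℝ) : Matrix (Fin n ⊕ Fin n) (Fin n ⊕ Fin n) ℝ :=
  fromBlocks Ai 0 0 0

/-- The block matrix `M₋ᵢ` for `1 ≤ i ≤ m`. -/
def Mneg (Ai : Matrix (Fin n) (Fin n) ℝ) : Matrix (Fin n ⊕ Fin n) (Fin n ⊕ Fin n) ℝ :=
  fromBlocks 0 0 0 (-Aiᵀ)

/-- `H_ξ(λ) = λI − M₀ − Σᵢ (Mᵢ e^{−λτᵢ} + M₋ᵢ e^{λτᵢ})`. -/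
def Hxi (A0 : Matrix (Fin n) (Fin n) ℝ) (A : Fin m → Matrix (Fin n) (Fin n) ℝ)
    (B : Matrix (Fin n) (Fin nu) ℝ) (C : Matrix (Fin ny) (Fin n) ℝ)
    (D : Matrix (Fin ny) (Fin nu) ℝ) (τ : Fin m → ℝ) (ξ : ℝ) (lam : ℂ) :
    Matrix (Fin n ⊕ Fin n) (Fin n ⊕ Fin n) ℂ :=
  lam • (1 : Matrix (Fin n ⊕ Fin n) (Fin n ⊕ Fin n) ℂ)
    - (Mzero A0 B C D ξ).map Complex.ofReal
    - ∑ i : Fin m, (Complex.exp (-lam * (τ i : ℂ)) • (Mpos (A i)).map Complex.ofReal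
        + Complex.exp (lam * (τ i : ℂ)) • (Mneg (A i)).map Complex.ofReal)

/-- `A(λ) = λI − A₀ − Σᵢ Aᵢ e^{−λτᵢ}`. -/
def Amat (A0 : Matrix (Fin n) (Fin n) ℝ) (A : Fin m → Matrix (Fin n) (Fin n) ℝ)
    (τ : Fin m → ℝ) (lam : ℂ) : Matrix (Fin n) (Fin n) ℂ :=
  lam • (1 : Matrix (Fin n) (Fin n) ℂ) - A0.map Complex.ofReal
    - ∑ i : Fin m, Complex.exp (-lam * (τ i : ℂ)) • (A i).map Complex.ofReal

/-- The transfer function `G(λ) = C A(λ)⁻¹ B + D`. -/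
def Gmat (A0 : Matrix (Fin n) (Fin n) ℝ) (A : Fin m → Matrix (Fin n) (Fin n) ℝ)
    (B : Matrix (Fin n) (Fin nu) ℝ) (C : Matrix (Fin ny) (Fin n) ℝ)
    (D : Matrix (Fin ny) (Fin nu) ℝ) (τ : Fin m → ℝ) (lam : ℂ) :
    Matrix (Fin ny) (Fin nu) ℂ :=
  C.map Complex.ofReal * (Amat A0 A τ lam)⁻¹ * B.map Complex.ofReal + D.map Complex.ofReal

/-- `τ_max`, the maximum of the delays. -/
def tauMax [NeZero m] (τ : Fin m → ℝ) : ℝ :=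
  Finset.univ.sup' Finset.univ_nonempty τ

/-- `λ` is an eigenvalue of the infinite-dimensional operator `L_ξ`: there is a continuously
differentiable, not identically zero function `u : [−τ_max, τ_max] → ℂ^{2n}` with
`u′(t) = λ u(t)` on the interval and `u′(0) = M₀ u(0) + Σᵢ (Mᵢ u(−τᵢ) + M₋ᵢ u(τᵢ))`. -/
def IsEigLxi [NeZero m] (A0 : Matrix (Fin n) (Fin n) ℝ) (A : Fin m → Matrix (Fin n) (Fin n) ℝ)
    (B : Matrix (Fin n) (Fin nu) ℝ) (C : Matrix (Fin ny) (Fin n) ℝ)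
    (D : Matrix (Fin ny) (Fin nu) ℝ) (τ : Fin m → ℝ) (ξ : ℝ) (lam : ℂ) : Prop :=
  ∃ u : ℝ → (Fin n ⊕ Fin n → ℂ),
    (∀ t ∈ Set.Icc (-(tauMax τ)) (tauMax τ),
      HasDerivWithinAt u (lam • u t) (Set.Icc (-(tauMax τ)) (tauMax τ)) t) ∧
    (∃ t ∈ Set.Icc (-(tauMax τ)) (tauMax τ), u t ≠ 0) ∧
    lam • u 0 = (Mzero A0 B C D ξ).map Complex.ofReal *ᵥ u 0
      + ∑ i : Fin m, ((Mpos (A i)).map Complex.ofReal *ᵥ u (-(τ i))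
          + (Mneg (A i)).map Complex.ofReal *ᵥ u (τ i))

open ComplexConjugate

namespace Matrix

variable {𝕜 : Type*} [Field 𝕜] {l u y : Type*}

section PushThrough

variable [DecidableEq u]

theorem sub_smul_one_eq_smul_one_sub (M : Matrix u u 𝕜) {c : 𝕜} (hc : c ≠ 0) :
    M - c • 1 = (-c) • (1 - c⁻¹ • M) := by
  rw [smul_sub, smul_smul, neg_mul, mul_inv_cancel₀ hc, neg_smul, neg_smul, one_smul,
    sub_neg_eq_add, neg_add_eq_sub]

variable [Fintype u] [Fintype y] [DecidableEq y]

theorem isUnit_mul_sub_smul_one_comm (X : Matrix y u 𝕜) (Y : Matrix u y 𝕜) {c : 𝕜} (hc : c ≠ 0)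
    (h : IsUnit (Y * X - c • 1)) : IsUnit (X * Y - c • 1) := by
  rw [isUnit_iff_isUnit_det, isUnit_iff_ne_zero] at h ⊢
  rw [sub_smul_one_eq_smul_one_sub _ hc, det_smul] at h ⊢
  rw [← smul_mul, det_one_sub_mul_comm, Matrix.mul_smul]
  exact mul_ne_zero (pow_ne_zero _ (neg_ne_zero.mpr hc)) (right_ne_zero_of_mul h)

theorem smul_inv_mul_sub_smul_one (X : Matrix y u 𝕜) (Y : Matrix u y 𝕜) {c : 𝕜} (hc : c ≠ 0)
    (h : IsUnit (Y * X - c • 1)) :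
    c • (X * Y - c • 1)⁻¹ = X * (Y * X - c • 1)⁻¹ * Y - 1 := by
  set E := Y * X - c • 1
  set F := X * Y - c • 1
  have hE := (isUnit_iff_isUnit_det E).mp h
  have hF := (isUnit_iff_isUnit_det F).mp (isUnit_mul_sub_smul_one_comm X Y hc h)
  have push : F⁻¹ * X = X * E⁻¹ := calc
    F⁻¹ * X = F⁻¹ * (X * E) * E⁻¹ := by
      rw [Matrix.mul_assoc, Matrix.mul_assoc, mul_nonsing_inv _ hE, Matrix.mul_one]
    _ = F⁻¹ * (F * X) * E⁻¹ := by
      simp only [E, F, Matrix.mul_sub, Matrix.sub_mul, Matrix.mul_assoc, Matrix.mul_smul,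
        Matrix.smul_mul, Matrix.mul_one, Matrix.one_mul]
    _ = X * E⁻¹ := by rw [← Matrix.mul_assoc, nonsing_inv_mul _ hF, Matrix.one_mul]
  calc c • F⁻¹ = F⁻¹ * (X * Y - F) := by rw [sub_sub_cancel, Matrix.mul_smul, Matrix.mul_one]
    _ = X * E⁻¹ * Y - 1 := by rw [Matrix.mul_sub, nonsing_inv_mul _ hF, ← Matrix.mul_assoc, push]

end PushThrough

section Hamiltonian

variable [Fintype y]
variable (P Q : Matrix l l 𝕜) (B : Matrix l u 𝕜) (C : Matrix y l 𝕜) (D : Matrix y u 𝕜)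
  (B' : Matrix u l 𝕜) (C' : Matrix l y 𝕜) (D' : Matrix u y 𝕜)

theorem fromBlocks_eq_add_fromRows_mul_mul_fromCols [Fintype u] (W : Matrix u u 𝕜) :
    fromBlocks (P + B * W * D' * C) (B * W * B') (C' * C - C' * D * W * D' * C)
        (-Q - C' * D * W * B') =
      fromBlocks P 0 (C' * C) (-Q) + fromRows B (-(C' * D)) * W * fromCols (D' * C) B' := by
  rw [fromRows_mul, fromRows_mul_fromCols, fromBlocks_add]
  simp only [Matrix.neg_mul, Matrix.mul_assoc, zero_add, sub_eq_add_neg]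

variable [Fintype l] [DecidableEq l]

theorem fromCols_mul_inv_fromBlocks_mul_fromRows (hP : IsUnit P) (hQ : IsUnit Q) :
    fromCols (D' * C) B' * (fromBlocks P 0 (C' * C) (-Q))⁻¹ * fromRows B (-(C' * D)) =
      (B' * Q⁻¹ * C' + D') * (C * P⁻¹ * B + D) - D' * D := by
  have inv_neg : (-Q)⁻¹ = -Q⁻¹ := inv_eq_left_inv <| by
    rw [Matrix.neg_mul, Matrix.mul_neg, neg_neg,
      nonsing_inv_mul _ ((isUnit_iff_isUnit_det Q).mp hQ)]
  rw [inv_fromBlocks_zero₁₂_of_isUnit_iff _ _ _ (by simp [hP, hQ]), inv_neg,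
    fromCols_mul_fromBlocks, fromCols_mul_fromRows]
  simp only [Matrix.mul_add, Matrix.add_mul, Matrix.neg_mul, Matrix.mul_neg, Matrix.mul_zero,
    Matrix.mul_assoc, neg_neg, zero_add]
  abel

variable [Fintype u] [DecidableEq u]

theorem det_fromBlocks_hamiltonian {E : Matrix u u 𝕜} {c : 𝕜} (hP : IsUnit P) (hQ : IsUnit Q)
    (hE : IsUnit E) (hEc : E = D' * D - c • 1) :
    (fromBlocks (P + B * E⁻¹ * D' * C) (B * E⁻¹ * B') (C' * C - C' * D * E⁻¹ * D' * C)
        (-Q - C' * D * E⁻¹ * B')).det =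
      P.det * (-Q).det * E⁻¹.det * ((B' * Q⁻¹ * C' + D') * (C * P⁻¹ * B + D) - c • 1).det := by
  set T := fromBlocks P 0 (C' * C) (-Q)
  have hT : IsUnit T.det := by
    rw [det_fromBlocks_zero₁₂]
    exact ((isUnit_iff_isUnit_det P).mp hP).mul ((isUnit_iff_isUnit_det _).mp hQ.neg)
  have feedback : 1 + E⁻¹ * fromCols (D' * C) B' * T⁻¹ * fromRows B (-(C' * D)) =
      E⁻¹ * ((B' * Q⁻¹ * C' + D') * (C * P⁻¹ * B + D) - c • 1) := by
    have one_add_inv_mul (X : Matrix u u 𝕜) : 1 + E⁻¹ * X = E⁻¹ * (E + X) := by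
      rw [Matrix.mul_add, nonsing_inv_mul E ((isUnit_iff_isUnit_det E).mp hE)]
    rw [Matrix.mul_assoc, Matrix.mul_assoc, ← Matrix.mul_assoc _ T⁻¹,
      fromCols_mul_inv_fromBlocks_mul_fromRows _ _ _ _ _ _ _ _ hP hQ, one_add_inv_mul, hEc]
    abel_nf
  rw [fromBlocks_eq_add_fromRows_mul_mul_fromCols, Matrix.mul_assoc, det_add_mul _ _ hT,
    feedback, det_mul, det_fromBlocks_zero₁₂]
  ring

end Hamiltonian

section OfReal

variable {p q r : Type*}

@[simp]
theorem map_ofReal_mul [Fintype q] (M : Matrix p q ℝ) (N : Matrix q r ℝ) :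
    (M * N).map ofReal = M.map ofReal * N.map ofReal :=
  Matrix.map_mul (f := ofRealHom)

@[simp]
theorem map_ofReal_smul (x : ℝ) (M : Matrix p q ℝ) :
    (x • M).map ofReal = (x : ℂ) • M.map ofReal := by
  ext; simp

@[simp]
theorem conjTranspose_map_ofReal (M : Matrix p q ℝ) : (M.map ofReal)ᴴ = (M.map ofReal)ᵀ := by
  ext; simp

theorem map_ofReal_inv [Fintype p] [DecidableEq p] (M : Matrix p p ℝ) :
    M⁻¹.map ofReal = (M.map ofReal)⁻¹ := by
  have hdet : (M.map ofReal).det = M.det := (RingHom.map_det ofRealHom M).symm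
  have hadj : (M.map ofReal).adjugate = M.adjugate.map ofReal :=
    (RingHom.map_adjugate ofRealHom M).symm
  rw [inv_def, inv_def, hdet, hadj, Ring.inverse_eq_inv', Ring.inverse_eq_inv', map_ofReal_smul,
    ofReal_inv]

theorem isUnit_map_ofReal [Fintype p] [DecidableEq p] {M : Matrix p p ℝ} (h : IsUnit M) :
    IsUnit (M.map ofReal) :=
  h.map (RingHom.mapMatrix ofRealHom)

end OfReal

end Matrix

theorem conjTranspose_Amat (A0 : Matrix (Fin n) (Fin n) ℝ) (A : Fin m → Matrix (Fin n) (Fin n) ℝ)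
    (τ : Fin m → ℝ) (lam : ℂ) : (Amat A0 A τ lam)ᴴ = (Amat A0 A τ (conj lam))ᵀ := by
  simp [Amat, conjTranspose_sum, transpose_sum, ← Complex.exp_conj]

theorem conjTranspose_Gmat (A0 : Matrix (Fin n) (Fin n) ℝ) (A : Fin m → Matrix (Fin n) (Fin n) ℝ)
    (B : Matrix (Fin n) (Fin nu) ℝ) (C : Matrix (Fin ny) (Fin n) ℝ)
    (D : Matrix (Fin ny) (Fin nu) ℝ) (τ : Fin m → ℝ) (lam : ℂ) :
    (Gmat A0 A B C D τ lam)ᴴ = (Gmat A0 A B C D τ (conj lam))ᵀ := by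
  simp [Gmat, conjTranspose_nonsing_inv, transpose_nonsing_inv, ← conjTranspose_Amat,
    Matrix.mul_assoc]

theorem Mzero_eq_fromBlocks (A0 : Matrix (Fin n) (Fin n) ℝ) (B : Matrix (Fin n) (Fin nu) ℝ)
    (C : Matrix (Fin ny) (Fin n) ℝ) (D : Matrix (Fin ny) (Fin nu) ℝ) {ξ : ℝ} (hξ : ξ ≠ 0)
    (hD : IsUnit (Dxi D ξ)) :
    Mzero A0 B C D ξ =
      fromBlocks (A0 - B * (Dxi D ξ)⁻¹ * Dᵀ * C) (-(B * (Dxi D ξ)⁻¹ * Bᵀ))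
        (Cᵀ * D * (Dxi D ξ)⁻¹ * Dᵀ * C - Cᵀ * C) (-A0ᵀ + Cᵀ * D * (Dxi D ξ)⁻¹ * Bᵀ) := by
  rw [Mzero, ← Matrix.smul_mul, ← Matrix.mul_smul, DxiT,
    smul_inv_mul_sub_smul_one D Dᵀ (pow_ne_zero 2 hξ) hD]
  simp only [Dxi, Matrix.mul_sub, Matrix.sub_mul, Matrix.mul_one, Matrix.mul_assoc]

theorem Hxi_eq_fromBlocks (A0 : Matrix (Fin n) (Fin n) ℝ) (A : Fin m → Matrix (Fin n) (Fin n) ℝ)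
    (B : Matrix (Fin n) (Fin nu) ℝ) (C : Matrix (Fin ny) (Fin n) ℝ)
    (D : Matrix (Fin ny) (Fin nu) ℝ) (τ : Fin m → ℝ) {ξ : ℝ} (hξ : ξ ≠ 0)
    (hD : IsUnit (Dxi D ξ)) (lam : ℂ) :
    let E := (Dxi D ξ).map ofReal
    Hxi A0 A B C D τ ξ lam =
      fromBlocks (Amat A0 A τ lam + B.map ofReal * E⁻¹ * (D.map ofReal)ᵀ * C.map ofReal)
        (B.map ofReal * E⁻¹ * (B.map ofReal)ᵀ)
        ((C.map ofReal)ᵀ * C.map ofReal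
          - (C.map ofReal)ᵀ * D.map ofReal * E⁻¹ * (D.map ofReal)ᵀ * C.map ofReal)
        (-(Amat A0 A τ (-lam))ᵀ - (C.map ofReal)ᵀ * D.map ofReal * E⁻¹ * (B.map ofReal)ᵀ) := by
  intro E
  rw [Hxi, Mzero_eq_fromBlocks A0 B C D hξ hD, fromBlocks_map]
  simp only [Matrix.map_sub, Matrix.map_add, Matrix.map_neg, map_ofReal_mul, map_ofReal_inv,
    transpose_map, ofReal_sub, ofReal_add, ofReal_neg, implies_true]
  ext (i | i) (j | j) <;>
    simp [E, Amat, Mpos, Mneg, Matrix.sum_apply, Matrix.one_apply] <;> ring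

theorem det_Hxi (A0 : Matrix (Fin n) (Fin n) ℝ) (A : Fin m → Matrix (Fin n) (Fin n) ℝ)
    (B : Matrix (Fin n) (Fin nu) ℝ) (C : Matrix (Fin ny) (Fin n) ℝ)
    (D : Matrix (Fin ny) (Fin nu) ℝ) (τ : Fin m → ℝ) {ξ : ℝ} (hξ : ξ ≠ 0)
    (hD : IsUnit (Dxi D ξ)) {lam : ℂ} (hA : IsUnit (Amat A0 A τ lam))
    (hA' : IsUnit (Amat A0 A τ (-lam))) :
    (Hxi A0 A B C D τ ξ lam).det =
      (Amat A0 A τ lam).det * (-(Amat A0 A τ (-lam))ᵀ).det * ((Dxi D ξ).map ofReal)⁻¹.det *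
        ((Gmat A0 A B C D τ (-lam))ᵀ * Gmat A0 A B C D τ lam - (ξ : ℂ) ^ 2 • 1).det := by
  have hEc : (Dxi D ξ).map ofReal = (D.map ofReal)ᵀ * D.map ofReal - (ξ : ℂ) ^ 2 • 1 := by
    simp [Dxi, Matrix.map_sub, transpose_map]
  rw [Hxi_eq_fromBlocks A0 A B C D τ hξ hD lam,
    det_fromBlocks_hamiltonian _ _ _ _ _ _ _ _ hA ((isUnit_transpose _).mpr hA')
      (isUnit_map_ofReal hD) hEc]
  simp [Gmat, transpose_nonsing_inv, Matrix.mul_assoc]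

theorem singular_value_iff_det_Hxi_eq_zero_general
    (A0 : Matrix (Fin n) (Fin n) ℝ) (A : Fin m → Matrix (Fin n) (Fin n) ℝ)
    (B : Matrix (Fin n) (Fin nu) ℝ) (C : Matrix (Fin ny) (Fin n) ℝ)
    (D : Matrix (Fin ny) (Fin nu) ℝ) (τ : Fin m → ℝ)
    (ξ : ℝ) (hξ : 0 < ξ) (hD : IsUnit (Dxi D ξ))
    (ω : ℝ) (hA : IsUnit (Amat A0 A τ (Complex.I * ω))) :
    ((Gmat A0 A B C D τ (Complex.I * ω))ᴴ * Gmat A0 A B C D τ (Complex.I * ω)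
        - ((ξ : ℂ) ^ 2) • 1).det = 0
      ↔ (Hxi A0 A B C D τ ξ (Complex.I * ω)).det = 0 := by
  have hconj : conj (I * ω) = -(I * ω) := by simp
  have hA' : IsUnit (Amat A0 A τ (-(I * ω))) := by
    rw [← hconj, ← isUnit_transpose, ← conjTranspose_Amat]
    exact hA.star
  have det_ne_zero {k : Type} [Fintype k] [DecidableEq k] {M : Matrix k k ℂ} (h : IsUnit M) :
      M.det ≠ 0 := ((isUnit_iff_isUnit_det M).mp h).ne_zero
  rw [conjTranspose_Gmat, hconj, det_Hxi A0 A B C D τ hξ.ne' hD hA hA']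
  simp [det_ne_zero hA, det_ne_zero ((isUnit_transpose _).mpr hA').neg,
    det_ne_zero (isUnit_map_ofReal hD)]

/-- for `ξ > 0` with `D_ξ` invertible and `ω ≥ 0` with `A(iω)` invertible,
`ξ` is a singular value of `G(iω)` iff `det H_ξ(iω) = 0`. -/
theorem singular_value_iff_det_Hxi_eq_zero [NeZero n] [NeZero nu] [NeZero ny] [NeZero m]
    (A0 : Matrix (Fin n) (Fin n) ℝ) (A : Fin m → Matrix (Fin n) (Fin n) ℝ)
    (B : Matrix (Fin n) (Fin nu) ℝ) (C : Matrix (Fin ny) (Fin n) ℝ)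
    (D : Matrix (Fin ny) (Fin nu) ℝ) (τ : Fin m → ℝ)
    (ξ : ℝ) (hξ : 0 < ξ) (hD : IsUnit (Dxi D ξ))
    (ω : ℝ) (hω : 0 ≤ ω) (hA : IsUnit (Amat A0 A τ (Complex.I * ω))) :
    ((Gmat A0 A B C D τ (Complex.I * ω))ᴴ * Gmat A0 A B C D τ (Complex.I * ω)
        - ((ξ : ℂ) ^ 2) • 1).det = 0
      ↔ (Hxi A0 A B C D τ ξ (Complex.I * ω)).det = 0 :=
  singular_value_iff_det_Hxi_eq_zero_general A0 A B C D τ ξ hξ hD ω hA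
end
end

section
/- Let ξ > 0 be such that D_ξ := DᵀD − ξ²I is invertible. Then for all λ ∈ ℂ, det H_ξ(−conj(λ)) = conj(det H_ξ(λ)). -/
open Matrix Complex

noncomputable section

variable {n nu ny m : ℕ}

/-- The symplectic-type matrix `J`. -/
def Jmat (n : ℕ) : Matrix (Fin n ⊕ Fin n) (Fin n ⊕ Fin n) ℝ :=
  fromBlocks 0 1 (-1) 0

lemma Jmat_conj (a b c d : Matrix (Fin n) (Fin n) ℝ) :
    Jmat n * fromBlocks a b c d * Jmat n = fromBlocks (-d) c b (-a) := by
  simp [Jmat, Matrix.fromBlocks_multiply]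

lemma Dxi_inv_symm (D : Matrix (Fin ny) (Fin nu) ℝ) (ξ : ℝ) :
    ((Dxi D ξ)⁻¹)ᵀ = (Dxi D ξ)⁻¹ := by
  rw [Matrix.transpose_nonsing_inv]
  congr 1
  simp [Dxi, Matrix.transpose_sub, Matrix.transpose_mul]

lemma DxiT_inv_symm (D : Matrix (Fin ny) (Fin nu) ℝ) (ξ : ℝ) :
    ((DxiT D ξ)⁻¹)ᵀ = (DxiT D ξ)⁻¹ := by
  rw [Matrix.transpose_nonsing_inv]
  congr 1
  simp [DxiT, Matrix.transpose_sub, Matrix.transpose_mul]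

lemma Jmat_Mzero (A0 : Matrix (Fin n) (Fin n) ℝ) (B : Matrix (Fin n) (Fin nu) ℝ)
    (C : Matrix (Fin ny) (Fin n) ℝ) (D : Matrix (Fin ny) (Fin nu) ℝ) (ξ : ℝ) :
    Jmat n * (Mzero A0 B C D ξ)ᵀ * Jmat n = Mzero A0 B C D ξ := by
  have h11 : -(-A0ᵀ + Cᵀ * D * (Dxi D ξ)⁻¹ * Bᵀ)ᵀ
      = A0 - B * (Dxi D ξ)⁻¹ * Dᵀ * C := by
    simp only [Matrix.transpose_add, Matrix.transpose_neg, Matrix.transpose_transpose,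
      Matrix.transpose_mul, Dxi_inv_symm, Matrix.mul_assoc, neg_add, neg_neg]
    abel
  have h12 : (-(B * (Dxi D ξ)⁻¹ * Bᵀ))ᵀ = -(B * (Dxi D ξ)⁻¹ * Bᵀ) := by
    simp [Matrix.transpose_neg, Matrix.transpose_mul, Dxi_inv_symm, Matrix.mul_assoc]
  have h21 : (ξ ^ 2 • (Cᵀ * (DxiT D ξ)⁻¹ * C))ᵀ = ξ ^ 2 • (Cᵀ * (DxiT D ξ)⁻¹ * C) := by
    simp [Matrix.transpose_smul, Matrix.transpose_mul, DxiT_inv_symm, Matrix.mul_assoc]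
  have h22 : -(A0 - B * (Dxi D ξ)⁻¹ * Dᵀ * C)ᵀ
      = -A0ᵀ + Cᵀ * D * (Dxi D ξ)⁻¹ * Bᵀ := by
    simp only [Matrix.transpose_sub, Matrix.transpose_mul, Matrix.transpose_transpose,
      Dxi_inv_symm, Matrix.mul_assoc, neg_sub]
    abel
  rw [Mzero, Matrix.fromBlocks_transpose, Jmat_conj, h11, h12, h21, h22]

lemma Jmat_Mpos (Ai : Matrix (Fin n) (Fin n) ℝ) :
    Jmat n * (Mpos Ai)ᵀ * Jmat n = Mneg Ai := by
  rw [Mpos, Matrix.fromBlocks_transpose, Jmat_conj]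
  simp [Mneg]

lemma Jmat_Mneg (Ai : Matrix (Fin n) (Fin n) ℝ) :
    Jmat n * (Mneg Ai)ᵀ * Jmat n = Mpos Ai := by
  rw [Mneg, Matrix.fromBlocks_transpose, Jmat_conj]
  simp [Mpos]

lemma Jmat_mul_Jmat : Jmat n * Jmat n = -1 := by
  have h1 : (-1 : Matrix (Fin n ⊕ Fin n) (Fin n ⊕ Fin n) ℝ)
      = fromBlocks (-1) 0 0 (-1) := by
    rw [← Matrix.fromBlocks_one, Matrix.fromBlocks_neg]
    simp
  rw [h1]
  simp [Jmat, Matrix.fromBlocks_multiply]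

/-- The complex version of `J`. -/
def JmatC (n : ℕ) : Matrix (Fin n ⊕ Fin n) (Fin n ⊕ Fin n) ℂ :=
  (Jmat n).map Complex.ofReal

lemma JmatC_conj (X : Matrix (Fin n ⊕ Fin n) (Fin n ⊕ Fin n) ℝ)
    (Y : Matrix (Fin n ⊕ Fin n) (Fin n ⊕ Fin n) ℝ)
    (h : Jmat n * Xᵀ * Jmat n = Y) :
    JmatC n * (X.map Complex.ofReal)ᵀ * JmatC n = Y.map Complex.ofReal := by
  have h2 := congrArg (fun M => (Complex.ofRealHom.mapMatrix :
    Matrix (Fin n ⊕ Fin n) (Fin n ⊕ Fin n) ℝ →+* Matrix (Fin n ⊕ Fin n) (Fin n ⊕ Fin n) ℂ) M) h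
  simp only [_root_.map_mul, RingHom.mapMatrix_apply, Matrix.transpose_map] at h2
  exact h2

lemma JmatC_mul_JmatC : JmatC n * JmatC n = -1 := by
  have h2 := congrArg (fun M => (Complex.ofRealHom.mapMatrix :
    Matrix (Fin n ⊕ Fin n) (Fin n ⊕ Fin n) ℝ →+* Matrix (Fin n ⊕ Fin n) (Fin n ⊕ Fin n) ℂ) M)
    (Jmat_mul_Jmat (n := n))
  simp only [_root_.map_mul, _root_.map_neg, _root_.map_one, RingHom.mapMatrix_apply] at h2
  exact h2

/-- The key Hamiltonian symmetry: `H(−λ) = J H(λ)ᵀ J`. -/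
lemma Hxi_neg (A0 : Matrix (Fin n) (Fin n) ℝ) (A : Fin m → Matrix (Fin n) (Fin n) ℝ)
    (B : Matrix (Fin n) (Fin nu) ℝ) (C : Matrix (Fin ny) (Fin n) ℝ)
    (D : Matrix (Fin ny) (Fin nu) ℝ) (τ : Fin m → ℝ) (ξ : ℝ) (lam : ℂ) :
    Hxi A0 A B C D τ ξ (-lam) = JmatC n * (Hxi A0 A B C D τ ξ lam)ᵀ * JmatC n := by
  rw [Hxi, Hxi]
  rw [Matrix.transpose_sub, Matrix.transpose_sub, Matrix.transpose_sum]
  simp only [Matrix.transpose_smul, Matrix.transpose_one, Matrix.transpose_add,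
    mul_sub, sub_mul]
  rw [Finset.mul_sum, Finset.sum_mul]
  congr 1
  · congr 1
    · rw [Matrix.mul_smul, Matrix.smul_mul, Matrix.mul_one, JmatC_mul_JmatC]
      simp
    · exact (JmatC_conj _ _ (Jmat_Mzero A0 B C D ξ)).symm
  · apply Finset.sum_congr rfl
    intro i _
    rw [mul_add, add_mul]
    rw [Matrix.mul_smul, Matrix.smul_mul, Matrix.mul_smul, Matrix.smul_mul]
    rw [JmatC_conj _ _ (Jmat_Mpos (A i)), JmatC_conj _ _ (Jmat_Mneg (A i))]
    rw [neg_neg]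
    exact add_comm _ _

lemma det_Hxi_neg (A0 : Matrix (Fin n) (Fin n) ℝ) (A : Fin m → Matrix (Fin n) (Fin n) ℝ)
    (B : Matrix (Fin n) (Fin nu) ℝ) (C : Matrix (Fin ny) (Fin n) ℝ)
    (D : Matrix (Fin ny) (Fin nu) ℝ) (τ : Fin m → ℝ) (ξ : ℝ) (lam : ℂ) :
    (Hxi A0 A B C D τ ξ (-lam)).det = (Hxi A0 A B C D τ ξ lam).det := by
  rw [Hxi_neg, Matrix.det_mul, Matrix.det_mul, Matrix.det_transpose]
  have h : (JmatC n).det * (JmatC n).det = 1 := by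
    rw [← Matrix.det_mul, JmatC_mul_JmatC, Matrix.det_neg, Matrix.det_one]
    simp [Fintype.card_sum, Even.neg_one_pow ⟨n, rfl⟩]
  calc (JmatC n).det * (Hxi A0 A B C D τ ξ lam).det * (JmatC n).det
      = (JmatC n).det * (JmatC n).det * (Hxi A0 A B C D τ ξ lam).det := by ring
    _ = (Hxi A0 A B C D τ ξ lam).det := by rw [h, one_mul]

lemma Hxi_map_conj (A0 : Matrix (Fin n) (Fin n) ℝ) (A : Fin m → Matrix (Fin n) (Fin n) ℝ)
    (B : Matrix (Fin n) (Fin nu) ℝ) (C : Matrix (Fin ny) (Fin n) ℝ)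
    (D : Matrix (Fin ny) (Fin nu) ℝ) (τ : Fin m → ℝ) (ξ : ℝ) (lam : ℂ) :
    (Hxi A0 A B C D τ ξ lam).map (starRingEnd ℂ)
      = Hxi A0 A B C D τ ξ ((starRingEnd ℂ) lam) := by
  ext i j
  simp only [Hxi, Matrix.map_apply, Matrix.sub_apply, Matrix.sum_apply, Matrix.add_apply,
    Matrix.smul_apply, smul_eq_mul, map_sub, map_sum, _root_.map_add, _root_.map_mul,
    map_neg, ← Complex.exp_conj, Complex.conj_ofReal, Matrix.one_apply,
    apply_ite (starRingEnd ℂ), _root_.map_one, _root_.map_zero]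

/-- `det H_ξ(−conj λ) = conj (det H_ξ(λ))` for all `λ ∈ ℂ`. -/
theorem det_Hxi_neg_conj [NeZero n] [NeZero nu] [NeZero ny] [NeZero m]
    (A0 : Matrix (Fin n) (Fin n) ℝ) (A : Fin m → Matrix (Fin n) (Fin n) ℝ)
    (B : Matrix (Fin n) (Fin nu) ℝ) (C : Matrix (Fin ny) (Fin n) ℝ)
    (D : Matrix (Fin ny) (Fin nu) ℝ) (τ : Fin m → ℝ)
    (ξ : ℝ) (hξ : 0 < ξ) (hD : IsUnit (Dxi D ξ)) :
    ∀ lam : ℂ, (Hxi A0 A B C D τ ξ (-(starRingEnd ℂ) lam)).det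
      = (starRingEnd ℂ) ((Hxi A0 A B C D τ ξ lam).det) := by
  intro lam
  rw [det_Hxi_neg, RingHom.map_det, RingHom.mapMatrix_apply, Hxi_map_conj]
end
end
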